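/- Let p_1, …, p_n be points in the Euclidean space ℝ^d and let 𝒳 be a subset of the convex hull conv{p_1, …, p_n}. For each x ∈ 𝒳 define the feasible-report set L_x = { y ∈ ℝ^n : y_i ≥ dist(p_i, x) for all i, and there exists x' ∈ 𝒳 with y_i = dist(p_i, x') for all i }. Then the source is identifiable: for any two distinct points x_1 ≠ x_2 in 𝒳, the sets L_{x_1} and L_{x_2} are disjoint, i.e., L_{x_1} ∩ L_{x_2} = ∅. -/

import Mathlib

open scoped RealInnerProductSpace

/-! A report in `L x₁ ∩ L x₂` is the exact distance vector of some `x' ∈ X` and dominates the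
distances to `x₁` and to `x₂`, so every observer is at least as close to `x₁` (and to `x₂`) as to
`x'`. The points with this property form a half-space, which therefore contains the convex hull
of the observers and hence `x'` itself; so `dist x' x₁ ≤ 0`, and likewise for `x₂`. -/

section

variable {E : Type*} [NormedAddCommGroup E] [InnerProductSpace ℝ E]

lemma setOf_dist_le_dist_eq_halfSpace (x z : E) :
    {q : E | dist q z ≤ dist q x} = {q : E | ⟪x - z, q⟫ ≤ (‖x‖ ^ 2 - ‖z‖ ^ 2) / 2} := by
  ext q
  rw [Set.mem_ofPred_eq, Set.mem_ofPred_eq, ← sq_le_sq₀ dist_nonneg dist_nonneg, dist_eq_norm,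
    dist_eq_norm, norm_sub_sq_real, norm_sub_sq_real, inner_sub_left, real_inner_comm x,
    real_inner_comm z]
  constructor <;> intro h <;> linarith

lemma convex_setOf_dist_le_dist (x z : E) : Convex ℝ {q : E | dist q z ≤ dist q x} := by
  rw [setOf_dist_le_dist_eq_halfSpace]
  exact convex_halfSpace_le (innerₛₗ ℝ (x - z)).isLinear _

lemma eq_of_mem_convexHull_of_forall_dist_le {s : Set E} {x z : E} (hx : x ∈ convexHull ℝ s)
    (h : ∀ q ∈ s, dist q z ≤ dist q x) : x = z := by
  have hxz : dist x z ≤ dist x x := convexHull_min h (convex_setOf_dist_le_dist x z) hx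
  rw [dist_self] at hxz
  exact dist_le_zero.mp hxz

end

theorem location_source_identifiable_of_subset_convexHull_general
    (d n : ℕ) (p : Fin n → EuclideanSpace ℝ (Fin d))
    (X : Set (EuclideanSpace ℝ (Fin d)))
    (hX : X ⊆ convexHull ℝ (Set.range p))
    (L : EuclideanSpace ℝ (Fin d) → Set (Fin n → ℝ))
    (hL : ∀ x, L x = { y : Fin n → ℝ |
      (∀ i, dist (p i) x ≤ y i) ∧ ∃ x' ∈ X, ∀ i, y i = dist (p i) x' })
    (x₁ x₂ : EuclideanSpace ℝ (Fin d))
    (hne : x₁ ≠ x₂) :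
    L x₁ ∩ L x₂ = ∅ := by
  rw [Set.eq_empty_iff_forall_notMem]
  rintro y ⟨hy₁, hy₂⟩
  rw [hL] at hy₁ hy₂
  obtain ⟨hy₁, x', hx', hy'⟩ := hy₁
  have eq_source : ∀ x, (∀ i, dist (p i) x ≤ y i) → x' = x := fun x hx =>
    eq_of_mem_convexHull_of_forall_dist_le (hX hx')
      (Set.forall_mem_range.2 fun i => hy' i ▸ hx i)
  exact hne ((eq_source x₁ hy₁).symm.trans (eq_source x₂ hy₂.1))

/-- In the location signal network model, if all possible source locations `𝒳` lie inside
the convex hull of the observers' locations, then the source is identifiable: for distinct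
`x₁ ≠ x₂` in `𝒳`, the feasible-report sets `L x₁` and `L x₂` are disjoint. -/
theorem location_source_identifiable_of_subset_convexHull
    (d n : ℕ) (p : Fin n → EuclideanSpace ℝ (Fin d))
    (X : Set (EuclideanSpace ℝ (Fin d)))
    (hX : X ⊆ convexHull ℝ (Set.range p))
    (L : EuclideanSpace ℝ (Fin d) → Set (Fin n → ℝ))
    (hL : ∀ x, L x = { y : Fin n → ℝ |
      (∀ i, dist (p i) x ≤ y i) ∧ ∃ x' ∈ X, ∀ i, y i = dist (p i) x' })
    (x₁ x₂ : EuclideanSpace ℝ (Fin d))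
    (hx₁ : x₁ ∈ X) (hx₂ : x₂ ∈ X) (hne : x₁ ≠ x₂) :
    L x₁ ∩ L x₂ = ∅ :=
  location_source_identifiable_of_subset_convexHull_general d n p X hX L hL x₁ x₂ hne
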